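/- Let K ∈ ℕ⁺ and J_1,…,J_K ∈ ℕ⁺ with J = ∏_{k=1}^K J_k, and set L_k = ∏_{k'=1}^k J_{k'}. Index the functions c̃^{j̲}(z) by j̲ ∈ N_{J̲} = {0} ∪ ({1,…,2J_1}×{1,…,J_2}×…×{1,…,J_K}), where c̃^0(z) = 1 and, for j̲ = (j_1,…,j_K), c̃^{j̲}(z) = c^{j_1}(z)·∏_{k=2}^K cos(2·L_{k−1}·z)^{j_k − 1}, with c^{2j−1}(z) = cos(z)^{2j−1} and c^{2j}(z) = sin(z)·cos(z)^{2j−2} for j ∈ ℕ⁺. Then there exists a linear map T : ℝ^{N_{J̲}} → ℝ^{2J+1} such that for every z ∈ (0,1), the vector (c_0(z), c_1(z), …, c_{2J}(z)) equals T applied to the vector (c̃^{j̲}(z))_{j̲ ∈ N_{J̲}}. -/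

import Mathlib

/-- `cfun j x`: c₀(x)=1, c_{2j-1}(x)=cos((2j-1)x), c_{2j}(x)=sin((2j-1)x). -/
noncomputable def cfun (j : ℕ) (x : ℝ) : ℝ :=
  if j = 0 then 1
  else if j % 2 = 1 then Real.cos ((j : ℝ) * x)
  else Real.sin (((j : ℝ) - 1) * x)

/-- `csmall n z`: c^{2j−1}(z) = cos(z)^{2j−1}, c^{2j}(z) = sin(z)·cos(z)^{2j−2}, for n ≥ 1. -/
noncomputable def csmall (n : ℕ) (z : ℝ) : ℝ :=
  if n % 2 = 1 then (Real.cos z) ^ n else Real.sin z * (Real.cos z) ^ (n - 2)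

/-- The index set N_{J̲} = {0} ∪ ({1,…,2J₁}×{1,…,J₂}×…×{1,…,J_K}); the `none`
element plays the role of the index 0, and `some j` encodes the tuple whose kth entry
is `(j k).val + 1`. -/
def NIdx (K : ℕ) (Js : Fin K → ℕ) : Type :=
  Option ((k : Fin K) → Fin (if k.val = 0 then 2 * Js k else Js k))

/-- `Lfun Js k = ∏_{k' < k} J_{k'}` (the partial products L_k, 0-indexed). -/
def Lfun {K : ℕ} (Js : Fin K → ℕ) (k : ℕ) : ℕ :=
  ∏ k' ∈ Finset.univ.filter (fun k' : Fin K => k'.val < k), Js k'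

/-- `ctilde`: c̃^0(z) = 1 and, for j̲ = (j₁,…,j_K),
c̃^{j̲}(z) = c^{j₁}(z)·∏_{k=2}^K cos(2·L_{k−1}·z)^{j_k − 1}. -/
noncomputable def ctilde {K : ℕ} (Js : Fin K → ℕ) (hK : 0 < K)
    (j : NIdx K Js) (z : ℝ) : ℝ :=
  match j with
  | none => 1
  | some jv =>
      csmall ((jv ⟨0, hK⟩).val + 1) z *
        ∏ k ∈ Finset.univ.filter (fun k : Fin K => 0 < k.val),
          (Real.cos (2 * (Lfun Js k.val : ℝ) * z)) ^ (jv k).val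

/-!
Every function involved has the form `φ z * P (cos z ^ 2)` with `φ = cos` or `φ = sin` and `P` a
real polynomial. Since `cos (2 L z) = T_L (2 cos² z - 1)` (Chebyshev), the function `c̃^{j̲}`
with first index of parity `t` corresponds to a polynomial of degree
`⌊(j₁ - 1)/2⌋ + ∑ L_{k-1} (j_k - 1)`, and the mixed-radix expansion shows that every degree `< J`
occurs; hence these polynomials span all polynomials of degree `< J`. Conversely the three-term
recurrence `φ((2n+3)z) = 2 cos(2z) φ((2n+1)z) - φ((2n-1)z)` writes `cos((2a-1)z)` and
`sin((2a-1)z)` as `cos z`, resp. `sin z`, times a polynomial of degree `a - 1` in `cos² z`. So every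
`c_j` is a fixed linear combination of the `c̃^{j̲}`, and `T` is the matrix of coefficients.
-/

open Real Polynomial

theorem exists_linearMap_apply_eq_of_mem_span {R X ι κ : Type*} [CommRing R] [Fintype ι]
    {f : ι → X → R} {g : κ → X → R} (hg : ∀ k, g k ∈ Submodule.span R (Set.range f)) :
    ∃ T : (ι → R) →ₗ[R] (κ → R), ∀ x, T (fun i => f i x) = fun k => g k x := by
  choose c hc using fun k => (Submodule.mem_span_range_iff_exists_fun R).mp (hg k)
  refine ⟨(Matrix.of c).mulVecLin, fun x => funext fun k => ?_⟩
  simp [Matrix.mulVec, dotProduct, ← hc k]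

theorem Polynomial.degreeLT_le_of_forall_exists_degree_eq {K : Type*} [Field K]
    {M : Submodule K K[X]} {m : ℕ} (h : ∀ i < m, ∃ p ∈ M, p.degree = i) :
    degreeLT K m ≤ M := by
  classical
  choose! p hpM hp using h
  let S : Sequence K :=
    { elems' := fun i => if i < m then p i else X ^ i
      degree_eq' := fun i => by split_ifs with hi <;> simp [hp i, *] }
  rw [← S.span_degreeLT fun i _ => isUnit_iff_ne_zero.mpr (leadingCoeff_ne_zero.mpr (S.ne_zero i))]
  refine Submodule.span_le.mpr ?_
  rintro _ ⟨i, hi, rfl⟩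
  have hi : i < m := hi
  simp [S, hi, hpM i hi]

theorem cos_two_mul_natCast_mul_eq_eval (L : ℕ) (z : ℝ) :
    cos (2 * L * z) = ((Chebyshev.T ℝ L).comp (2 * X - 1)).eval (cos z ^ 2) := by
  have h2 : (2 : ℝ) * cos z ^ 2 - 1 = cos (2 * z) := (cos_two_mul z).symm
  simp [h2, mul_comm, mul_left_comm]

theorem degree_T_comp_two_mul_X_sub_one (L : ℕ) :
    ((Chebyshev.T ℝ L).comp (2 * X - 1 : ℝ[X])).degree = L := by
  have h : (2 * X - 1 : ℝ[X]).degree = 1 := by compute_degree!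
  rw [degree_comp (by rw [h]; exact zero_lt_one), h]
  simp

theorem exists_natDegree_le_odd_mul_eq_mul_eval {φ : ℝ → ℝ} {ε : ℝ}
    (hadd : ∀ x y, φ (x + y) + φ (x - y) = 2 * φ x * cos y) (hneg : ∀ x, φ (-x) = ε * φ x)
    (n : ℕ) :
    ∃ Q : ℝ[X], Q.natDegree ≤ n ∧ ∀ z, φ ((2 * n + 1) * z) = φ z * Q.eval (cos z ^ 2) := by
  -- The recurrence has two terms of memory; for `n = 0` the lower one is `φ (-z) = ε φ z`.
  suffices ∃ P Q : ℝ[X], P.natDegree ≤ n - 1 ∧ Q.natDegree ≤ n ∧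
      ∀ z, φ ((2 * n - 1) * z) = φ z * P.eval (cos z ^ 2) ∧
        φ ((2 * n + 1) * z) = φ z * Q.eval (cos z ^ 2) by
    obtain ⟨_, Q, _, hQ, h⟩ := this
    exact ⟨Q, hQ, fun z => (h z).2⟩
  induction n with
  | zero => exact ⟨C ε, 1, by simp, by simp, fun z => by simp [hneg, mul_comm]⟩
  | succ n ih =>
    obtain ⟨P, Q, hP, hQ, h⟩ := ih
    refine ⟨Q, 2 * (2 * X - 1) * Q - P, hQ, ?_, fun z => ⟨?_, ?_⟩⟩
    · have h1 : (2 * (2 * X - 1) : ℝ[X]).natDegree ≤ 1 := by compute_degree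
      refine (natDegree_sub_le _ _).trans (max_le ?_ (hP.trans (by omega)))
      exact natDegree_mul_le.trans (by omega)
    · rw [← (h z).2]; push_cast; ring_nf
    · have hrec := hadd ((2 * n + 1) * z) (2 * z)
      rw [show (2 * n + 1) * z - 2 * z = (2 * n - 1) * z by ring, (h z).1, (h z).2,
        cos_two_mul] at hrec
      push_cast
      simp only [eval_sub, eval_mul, eval_X, eval_ofNat, eval_one]
      rw [show (2 * (n + 1) + 1) * z = (2 * n + 1) * z + 2 * z by ring]
      linear_combination hrec

noncomputable def cosOrSin (t : ℕ) : ℝ → ℝ := if t % 2 = 0 then cos else sin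

theorem cosOrSin_add_add_cosOrSin_sub (t : ℕ) (x y : ℝ) :
    cosOrSin t (x + y) + cosOrSin t (x - y) = 2 * cosOrSin t x * cos y := by
  unfold cosOrSin
  split_ifs
  · rw [cos_add, cos_sub]; ring
  · rw [sin_add, sin_sub]; ring

theorem cosOrSin_neg (t : ℕ) (x : ℝ) : cosOrSin t (-x) = (-1) ^ t * cosOrSin t x := by
  unfold cosOrSin
  rcases Nat.even_or_odd t with ht | ht
  · simp [Nat.even_iff.mp ht, ht.neg_one_pow]
  · simp [Nat.odd_iff.mp ht, ht.neg_one_pow]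

theorem csmall_succ (j : ℕ) (z : ℝ) :
    csmall (j + 1) z = cosOrSin j z * (cos z ^ 2) ^ (j / 2) := by
  obtain ⟨m, rfl | rfl⟩ := Nat.even_or_odd' j
  · simp [csmall, cosOrSin, pow_succ, Nat.add_mod]
    ring
  · have hm : (2 * m + 1) / 2 = m := by omega
    simp [csmall, cosOrSin, Nat.add_mod, ← pow_mul, hm]

theorem cfun_eq_cosOrSin {j : ℕ} (hj : j ≠ 0) (z : ℝ) :
    cfun j z = cosOrSin (j + 1) ((2 * ((j - 1) / 2 : ℕ) + 1) * z) := by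
  obtain ⟨m, rfl | rfl⟩ := Nat.even_or_odd' j
  · obtain ⟨m, rfl⟩ := Nat.exists_eq_succ_of_ne_zero (by omega : m ≠ 0)
    have hm : (2 * (m + 1) - 1) / 2 = m := by omega
    simp [cfun, cosOrSin, Nat.add_mod, hm]
    ring_nf
  · simp [cfun, cosOrSin, Nat.add_mod]

section MixedRadix

theorem Lfun_zero {K : ℕ} (n : Fin K → ℕ) : Lfun n 0 = 1 := by
  simp [Lfun]

theorem Lfun_eq_prod_castLE {K : ℕ} (n : Fin K → ℕ) (k : Fin K) :
    Lfun n k = ∏ j : Fin k, n (Fin.castLE k.is_lt.le j) := by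
  refine Finset.prod_bij (fun j hj => ⟨j, (Finset.mem_filter.mp hj).2⟩) (by simp)
    (fun _ _ _ _ h => by simpa [Fin.ext_iff] using h)
    (fun j _ => ⟨Fin.castLE k.is_lt.le j, ?_, rfl⟩)
    (fun _ _ => rfl)
  simp only [Finset.mem_filter, Finset.mem_univ, true_and, Fin.val_castLE, j.is_lt]

theorem finPiFinEquiv_apply_eq_sum_Lfun {K : ℕ} {n : Fin K → ℕ} (f : ∀ k, Fin (n k)) :
    (finPiFinEquiv f : ℕ) = ∑ k, f k * Lfun n k := by
  simp [finPiFinEquiv_apply, Lfun_eq_prod_castLE]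

variable {K : ℕ} (Js : Fin K → ℕ)

theorem Lfun_double_head (hK : 0 < K) {k : ℕ} (hk : 0 < k) :
    Lfun (fun k : Fin K => if k.val = 0 then 2 * Js k else Js k) k = 2 * Lfun Js k := by
  have h0 : (⟨0, hK⟩ : Fin K) ∈ Finset.univ.filter (fun k' : Fin K => k'.val < k) := by simpa
  rw [Lfun, Lfun, ← Finset.mul_prod_erase _ _ h0, ← Finset.mul_prod_erase _ _ h0, if_pos rfl,
    mul_assoc]
  refine congrArg _ (congrArg _ (Finset.prod_congr rfl fun i hi => if_neg ?_))
  exact fun h => (Finset.mem_erase.mp hi).1 (Fin.ext h)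

theorem finPiFinEquiv_apply_eq_head_add (hK : 0 < K)
    (jv : ∀ k : Fin K, Fin (if k.val = 0 then 2 * Js k else Js k)) :
    (finPiFinEquiv jv : ℕ) =
      jv ⟨0, hK⟩ + 2 * ∑ k ∈ Finset.univ.filter (fun k : Fin K => 0 < k.val), Lfun Js k * jv k := by
  have hrest : Finset.univ.erase (⟨0, hK⟩ : Fin K) =
      Finset.univ.filter (fun k : Fin K => 0 < k.val) := by
    ext k; simp [Fin.ext_iff, Nat.pos_iff_ne_zero]
  rw [finPiFinEquiv_apply_eq_sum_Lfun, ← Finset.add_sum_erase _ _ (Finset.mem_univ ⟨0, hK⟩),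
    hrest, Lfun_zero, mul_one, Finset.mul_sum]
  refine congrArg _ (Finset.sum_congr rfl fun k hk => ?_)
  rw [Lfun_double_head Js hK (Finset.mem_filter.mp hk).2]
  ring

end MixedRadix

section Span

variable {K : ℕ} (Js : Fin K → ℕ) (hK : 0 < K)

noncomputable def ctildePoly (jv : ∀ k : Fin K, Fin (if k.val = 0 then 2 * Js k else Js k)) :
    ℝ[X] :=
  X ^ ((jv ⟨0, hK⟩ : ℕ) / 2) * ∏ k ∈ Finset.univ.filter (fun k : Fin K => 0 < k.val),
    ((Chebyshev.T ℝ (Lfun Js k)).comp (2 * X - 1)) ^ (jv k : ℕ)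

theorem ctilde_some_eq (jv : ∀ k : Fin K, Fin (if k.val = 0 then 2 * Js k else Js k)) (z : ℝ) :
    ctilde Js hK (some jv) z =
      cosOrSin (jv ⟨0, hK⟩) z * (ctildePoly Js hK jv).eval (cos z ^ 2) := by
  simp only [ctilde, ctildePoly, csmall_succ, eval_mul, eval_pow, eval_X, eval_prod,
    ← cos_two_mul_natCast_mul_eq_eval]
  ring

theorem degree_ctildePoly (jv : ∀ k : Fin K, Fin (if k.val = 0 then 2 * Js k else Js k)) :
    (ctildePoly Js hK jv).degree =
      ((jv ⟨0, hK⟩ : ℕ) / 2 + ∑ k ∈ Finset.univ.filter (fun k : Fin K => 0 < k.val),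
        Lfun Js k * jv k : ℕ) := by
  simp only [ctildePoly, degree_mul, degree_pow, degree_prod, degree_X,
    degree_T_comp_two_mul_X_sub_one]
  push_cast
  simp only [nsmul_eq_mul, mul_one, mul_comm]

instance : Fintype (NIdx K Js) := inferInstanceAs (Fintype (Option _))

noncomputable def cosOrSinMulEval (t : ℕ) : ℝ[X] →ₗ[ℝ] (ℝ → ℝ) :=
  LinearMap.pi fun z => cosOrSin t z • leval (cos z ^ 2)

theorem cosOrSinMulEval_mem_span_ctilde (t : ℕ) {Q : ℝ[X]}
    (hQ : Q ∈ degreeLT ℝ (∏ k, Js k)) :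
    cosOrSinMulEval t Q ∈ Submodule.span ℝ (Set.range (ctilde Js hK)) := by
  refine degreeLT_le_of_forall_exists_degree_eq
    (M := (Submodule.span ℝ (Set.range (ctilde Js hK))).comap (cosOrSinMulEval t))
    (fun d hd => ?_) hQ
  have hn : 2 * d + t % 2 < ∏ k : Fin K, (if k.val = 0 then 2 * Js k else Js k) := by
    have := Lfun_double_head Js hK hK
    simp only [Lfun, Fin.is_lt, Finset.filter_true] at this
    omega
  -- The index with mixed-radix value `2 d + t % 2` has degree `d` and first digit of parity `t`.
  set jv := finPiFinEquiv.symm ⟨2 * d + t % 2, hn⟩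
  have hjv := finPiFinEquiv_apply_eq_head_add Js hK jv
  rw [Equiv.apply_symm_apply, Fin.val_mk] at hjv
  refine ⟨ctildePoly Js hK jv, Submodule.subset_span ⟨some jv, funext fun z => ?_⟩, ?_⟩
  · have hpar : (jv ⟨0, hK⟩ : ℕ) % 2 = t % 2 := by omega
    simp [ctilde_some_eq, cosOrSinMulEval, cosOrSin, hpar]
  · rw [degree_ctildePoly, Nat.cast_inj]
    omega

theorem cfun_mem_span_ctilde {j : ℕ} (hj : j ≤ 2 * ∏ k, Js k) :
    (fun z => cfun j z) ∈ Submodule.span ℝ (Set.range (ctilde Js hK)) := by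
  rcases eq_or_ne j 0 with rfl | hj0
  · exact Submodule.subset_span ⟨none, funext fun z => by simp [ctilde, cfun]⟩
  obtain ⟨Q, hQ, hφ⟩ := exists_natDegree_le_odd_mul_eq_mul_eval
    (cosOrSin_add_add_cosOrSin_sub (j + 1)) (cosOrSin_neg (j + 1)) ((j - 1) / 2)
  convert cosOrSinMulEval_mem_span_ctilde Js hK (j + 1) (Q := Q) ?_ using 1
  · funext z
    simp [cosOrSinMulEval, cfun_eq_cosOrSin hj0, hφ]
  · exact mem_degreeLT.mpr ((degree_le_of_natDegree_le hQ).trans_lt (by exact_mod_cast (by omega)))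

end Span

theorem exists_linear_transform_1d_general (K : ℕ) (hK : 0 < K) (Js : Fin K → ℕ) :
    ∃ T : (NIdx K Js → ℝ) →ₗ[ℝ] (Fin (2 * (∏ k, Js k) + 1) → ℝ),
      ∀ z ∈ Set.Ioo (0 : ℝ) 1,
        T (fun j => ctilde Js hK j z) = fun j => cfun j.val z := by
  obtain ⟨T, hT⟩ := exists_linearMap_apply_eq_of_mem_span
    fun j : Fin (2 * (∏ k, Js k) + 1) => cfun_mem_span_ctilde Js hK (Nat.le_of_lt_succ j.is_lt)
  exact ⟨T, fun z _ => hT z⟩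

/-- there is a linear map T sending the vector (c̃^{j̲}(z))_{j̲ ∈ N_{J̲}}
to the vector (c₀(z), …, c_{2J}(z)) simultaneously for every z ∈ (0,1). -/
theorem exists_linear_transform_1d (K : ℕ) (hK : 0 < K) (Js : Fin K → ℕ)
    (hJs : ∀ k, 0 < Js k) :
    ∃ T : (NIdx K Js → ℝ) →ₗ[ℝ] (Fin (2 * (∏ k, Js k) + 1) → ℝ),
      ∀ z ∈ Set.Ioo (0 : ℝ) 1,
        T (fun j => ctilde Js hK j z) = fun j => cfun j.val z :=
  exists_linear_transform_1d_general K hK Js
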